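/- Under y = Xβ + ε (E(ε)=0, Var(ε)=σ²I) and r = Rβ + e (E(e)=0, Var(e)=σ²Ω, e independent of ε), the stochastic restricted ridge estimator β̂_SRR satisfies E(β̂_SRR) = β + A(W − I)Sβ and Var(β̂_SRR) = σ²A(WSWᵀ + v²RᵀΩ⁻¹R)A, where A = (S + vRᵀΩ⁻¹R)⁻¹ and W = (I + kS⁻¹)⁻¹. -/

import Mathlib

/-!
A push-through identity turns the gain `S⁻¹Rᵀ(Ω + vRS⁻¹Rᵀ)⁻¹` into `ARᵀΩ⁻¹`, which puts the
estimator in mixed form `β̂_SRR = A(Sβ̂_R + vRᵀΩ⁻¹r)`. As `W` commutes with `S`, `Sβ̂_R = WXᵀy`,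
and substituting the two models gives `β̂_SRR = β + A(W - I)Sβ + AWXᵀε + vARᵀΩ⁻¹e`, an affine
function of the centred errors. Its mean is the constant term. The cross moments of the
independent centred errors vanish, so its covariance is
`σ²(AWXᵀ)(AWXᵀ)ᵀ + σ²v²(ARᵀΩ⁻¹)Ω(ARᵀΩ⁻¹)ᵀ`, which simplifies by `XᵀX = S` and the symmetry of
`A` and `Ω`.
-/

open MeasureTheory Matrix

/-- Componentwise mean of a random vector. -/
noncomputable def vmean {Ω : Type*} [MeasurableSpace Ω] (μ : Measure Ω) {n : Type*}
    (f : Ω → n → ℝ) : n → ℝ := fun i => ∫ ω, f ω i ∂μ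

/-- Covariance matrix of a random vector. -/
noncomputable def vcov {Ω : Type*} [MeasurableSpace Ω] (μ : Measure Ω) {n : Type*}
    (f : Ω → n → ℝ) : Matrix n n ℝ :=
  Matrix.of fun i j => ∫ ω, (f ω i - vmean μ f i) * (f ω j - vmean μ f j) ∂μ

open ProbabilityTheory

section Moments

variable {Ω : Type*} [MeasurableSpace Ω] {μ : Measure Ω} {l m n : Type*}

noncomputable def crossMoment (μ : Measure Ω) (f : Ω → m → ℝ) (g : Ω → n → ℝ) :
    Matrix m n ℝ :=
  of fun i j => ∫ ω, f ω i * g ω j ∂μ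

lemma integrable_mul_apply_of_memLp {f : Ω → m → ℝ} {g : Ω → n → ℝ}
    (hf : ∀ a, MemLp (fun ω => f ω a) 2 μ) (hg : ∀ b, MemLp (fun ω => g ω b) 2 μ)
    (a : m) (b : n) : Integrable (fun ω => f ω a * g ω b) μ :=
  (hf a).integrable_mul (hg b)

lemma memLp_mulVec_apply [Fintype m] {p : ENNReal} (M : Matrix l m ℝ) {f : Ω → m → ℝ}
    (hf : ∀ a, MemLp (fun ω => f ω a) p μ) (i : l) :
    MemLp (fun ω => (M *ᵥ f ω) i) p μ :=
  memLp_finsetSum _ fun a _ => (hf a).const_mul (M i a)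

lemma integrable_mulVec_apply [Fintype m] (M : Matrix l m ℝ) {f : Ω → m → ℝ}
    (hf : ∀ a, Integrable (fun ω => f ω a) μ) (i : l) : Integrable (fun ω => (M *ᵥ f ω) i) μ :=
  integrable_finsetSum _ fun a _ => (hf a).const_mul (M i a)

lemma vmean_mulVec [Fintype m] (M : Matrix l m ℝ) {f : Ω → m → ℝ}
    (hf : ∀ a, Integrable (fun ω => f ω a) μ) :
    vmean μ (fun ω => M *ᵥ f ω) = M *ᵥ vmean μ f := by
  ext i
  simp only [vmean, mulVec, dotProduct]
  rw [integral_finsetSum _ fun a _ => (hf a).const_mul (M i a)]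
  simp only [integral_const_mul]

lemma vmean_add {f g : Ω → n → ℝ} (hf : ∀ a, Integrable (fun ω => f ω a) μ)
    (hg : ∀ a, Integrable (fun ω => g ω a) μ) :
    vmean μ (fun ω => f ω + g ω) = vmean μ f + vmean μ g := by
  ext i
  exact integral_add (hf i) (hg i)

lemma vmean_const_add [IsProbabilityMeasure μ] (c : n → ℝ) {f : Ω → n → ℝ}
    (hf : ∀ a, Integrable (fun ω => f ω a) μ) :
    vmean μ (fun ω => c + f ω) = c + vmean μ f := by
  ext i
  simp only [vmean, Pi.add_apply]
  rw [integral_add (integrable_const _) (hf i), integral_const, probReal_univ, one_smul]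

lemma vcov_const_add [IsProbabilityMeasure μ] (c : n → ℝ) {f : Ω → n → ℝ}
    (hf : ∀ a, Integrable (fun ω => f ω a) μ) :
    vcov μ (fun ω => c + f ω) = vcov μ f := by
  ext i j
  simp [vcov, vmean_const_add c hf]

lemma vcov_eq_crossMoment {f : Ω → n → ℝ} (hf : vmean μ f = 0) :
    vcov μ f = crossMoment μ f f := by
  ext i j
  simp [vcov, crossMoment, hf]

lemma crossMoment_add_left {f f' : Ω → m → ℝ} {g : Ω → n → ℝ}
    (hf : ∀ a, MemLp (fun ω => f ω a) 2 μ) (hf' : ∀ a, MemLp (fun ω => f' ω a) 2 μ)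
    (hg : ∀ b, MemLp (fun ω => g ω b) 2 μ) :
    crossMoment μ (fun ω => f ω + f' ω) g = crossMoment μ f g + crossMoment μ f' g := by
  ext i j
  simp only [crossMoment, of_apply, Matrix.add_apply, Pi.add_apply, add_mul]
  exact integral_add (integrable_mul_apply_of_memLp hf hg i j)
    (integrable_mul_apply_of_memLp hf' hg i j)

lemma crossMoment_add_right {f : Ω → m → ℝ} {g g' : Ω → n → ℝ}
    (hf : ∀ a, MemLp (fun ω => f ω a) 2 μ) (hg : ∀ b, MemLp (fun ω => g ω b) 2 μ)
    (hg' : ∀ b, MemLp (fun ω => g' ω b) 2 μ) :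
    crossMoment μ f (fun ω => g ω + g' ω) = crossMoment μ f g + crossMoment μ f g' := by
  ext i j
  simp only [crossMoment, of_apply, Matrix.add_apply, Pi.add_apply, mul_add]
  exact integral_add (integrable_mul_apply_of_memLp hf hg i j)
    (integrable_mul_apply_of_memLp hf hg' i j)

lemma crossMoment_mulVec_left [Fintype m] (M : Matrix l m ℝ) {f : Ω → m → ℝ}
    {g : Ω → n → ℝ} (hf : ∀ a, MemLp (fun ω => f ω a) 2 μ)
    (hg : ∀ b, MemLp (fun ω => g ω b) 2 μ) :
    crossMoment μ (fun ω => M *ᵥ f ω) g = M * crossMoment μ f g := by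
  ext i j
  simp only [crossMoment, of_apply, mul_apply, mulVec, dotProduct, Finset.sum_mul, mul_assoc]
  rw [integral_finsetSum _ fun a _ => (integrable_mul_apply_of_memLp hf hg a j).const_mul _]
  simp only [integral_const_mul]

lemma crossMoment_mulVec_right [Fintype n] (M : Matrix l n ℝ) {f : Ω → m → ℝ}
    {g : Ω → n → ℝ} (hf : ∀ a, MemLp (fun ω => f ω a) 2 μ)
    (hg : ∀ b, MemLp (fun ω => g ω b) 2 μ) :
    crossMoment μ f (fun ω => M *ᵥ g ω) = crossMoment μ f g * Mᵀ := by
  ext i j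
  simp only [crossMoment, of_apply, mul_apply, mulVec, dotProduct, transpose_apply,
    Finset.mul_sum, mul_left_comm (f _ i)]
  rw [integral_finsetSum _ fun b _ => (integrable_mul_apply_of_memLp hf hg i b).const_mul _]
  simp only [integral_const_mul]
  exact Finset.sum_congr rfl fun _ _ => mul_comm _ _

lemma crossMoment_eq_zero_of_indepFun {f : Ω → m → ℝ} {g : Ω → n → ℝ}
    (hindep : IndepFun f g μ) (hf : ∀ a, AEStronglyMeasurable (fun ω => f ω a) μ)
    (hg : ∀ b, AEStronglyMeasurable (fun ω => g ω b) μ) (hmean : vmean μ f = 0) :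
    crossMoment μ f g = 0 := by
  ext i j
  have hij : IndepFun (fun ω => f ω i) (fun ω => g ω j) μ :=
    hindep.comp (measurable_pi_apply i) (measurable_pi_apply j)
  rw [crossMoment, of_apply, hij.integral_fun_mul_eq_mul_integral (hf i) (hg j)]
  simp [show ∫ ω, f ω i ∂μ = 0 from congrFun hmean i]

end Moments

section AffineTransform

variable {Ω : Type*} [MeasurableSpace Ω] {μ : Measure Ω} {l m n : Type*} [Fintype m]
  [Fintype n] {ε : Ω → m → ℝ} {e : Ω → n → ℝ}

lemma vmean_mulVec_add_mulVec (M : Matrix l m ℝ) (M' : Matrix l n ℝ)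
    (hε : ∀ a, Integrable (fun ω => ε ω a) μ) (he : ∀ b, Integrable (fun ω => e ω b) μ) :
    vmean μ (fun ω => M *ᵥ ε ω + M' *ᵥ e ω) = M *ᵥ vmean μ ε + M' *ᵥ vmean μ e := by
  rw [vmean_add (integrable_mulVec_apply M hε) (integrable_mulVec_apply M' he),
    vmean_mulVec M hε, vmean_mulVec M' he]

variable [IsProbabilityMeasure μ]

theorem vmean_const_add_mulVec_add_mulVec (c : l → ℝ) (M : Matrix l m ℝ) (M' : Matrix l n ℝ)
    (hε : ∀ a, Integrable (fun ω => ε ω a) μ) (he : ∀ b, Integrable (fun ω => e ω b) μ)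
    (hεmean : vmean μ ε = 0) (hemean : vmean μ e = 0) :
    vmean μ (fun ω => c + (M *ᵥ ε ω + M' *ᵥ e ω)) = c := by
  have hu (i : l) : Integrable (fun ω => (M *ᵥ ε ω + M' *ᵥ e ω) i) μ :=
    (integrable_mulVec_apply M hε i).add (integrable_mulVec_apply M' he i)
  rw [vmean_const_add c hu, vmean_mulVec_add_mulVec M M' hε he, hεmean, hemean]
  simp

theorem vcov_const_add_mulVec_add_mulVec (c : l → ℝ) (M : Matrix l m ℝ) (M' : Matrix l n ℝ)
    (hε : ∀ a, MemLp (fun ω => ε ω a) 2 μ) (he : ∀ b, MemLp (fun ω => e ω b) 2 μ)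
    (hεmean : vmean μ ε = 0) (hemean : vmean μ e = 0) (hindep : IndepFun ε e μ) :
    vcov μ (fun ω => c + (M *ᵥ ε ω + M' *ᵥ e ω)) = M * vcov μ ε * Mᵀ + M' * vcov μ e * M'ᵀ := by
  have hε₁ a := (hε a).integrable one_le_two
  have he₁ b := (he b).integrable one_le_two
  have hMε := memLp_mulVec_apply M hε
  have hMe := memLp_mulVec_apply M' he
  have hmean : vmean μ (fun ω => M *ᵥ ε ω + M' *ᵥ e ω) = 0 := by
    rw [vmean_mulVec_add_mulVec M M' hε₁ he₁, hεmean, hemean]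
    simp
  have hu (i : l) : MemLp (fun ω => (M *ᵥ ε ω + M' *ᵥ e ω) i) 2 μ := (hMε i).add (hMe i)
  rw [vcov_const_add c fun i => (hu i).integrable one_le_two, vcov_eq_crossMoment hmean,
    crossMoment_add_left hMε hMe hu,
    crossMoment_add_right hMε hMε hMe, crossMoment_add_right hMe hMε hMe,
    crossMoment_mulVec_left M hε hMε, crossMoment_mulVec_right M hε hε,
    crossMoment_mulVec_left M hε hMe, crossMoment_mulVec_right M' hε he,
    crossMoment_mulVec_left M' he hMε, crossMoment_mulVec_right M he hε,
    crossMoment_mulVec_left M' he hMe, crossMoment_mulVec_right M' he he,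
    crossMoment_eq_zero_of_indepFun hindep (fun a => (hε a).1) (fun b => (he b).1) hεmean,
    crossMoment_eq_zero_of_indepFun hindep.symm (fun b => (he b).1) (fun a => (hε a).1) hemean,
    vcov_eq_crossMoment hεmean, vcov_eq_crossMoment hemean]
  simp [Matrix.mul_assoc]

end AffineTransform

section LinearAlgebra

variable {K : Type*} [CommRing K] {p q : Type*} [Fintype p] [DecidableEq p] [Fintype q]
  [DecidableEq q]

theorem Commute.nonsing_inv_nonsing_inv {A B : Matrix p p K} (h : Commute A B) :
    Commute A⁻¹ B⁻¹ := by
  simpa only [nonsing_inv_eq_ringInverse] using h.ringInverse_ringInverse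

theorem commute_nonsing_inv_one_add_smul_nonsing_inv {S : Matrix p p K} (hS : IsUnit S.det)
    (k : K) : Commute S (1 + k • S⁻¹)⁻¹ := by
  have h : Commute S⁻¹ (1 + k • S⁻¹) :=
    (Commute.one_right _).add_right ((Commute.refl _).smul_right k)
  simpa only [nonsing_inv_nonsing_inv S hS] using h.nonsing_inv_nonsing_inv

theorem nonsing_inv_mul_mul_nonsing_inv_add (S : Matrix p p K) (C : Matrix q q K)
    (U : Matrix p q K) (V : Matrix q p K) (hS : IsUnit S.det) (hC : IsUnit C.det)
    (hSC : IsUnit (S + U * C⁻¹ * V).det) (hCS : IsUnit (C + V * S⁻¹ * U).det) :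
    S⁻¹ * U * (C + V * S⁻¹ * U)⁻¹ = (S + U * C⁻¹ * V)⁻¹ * U * C⁻¹ := by
  have key : (S + U * C⁻¹ * V) * (S⁻¹ * U) = U * C⁻¹ * (C + V * S⁻¹ * U) := by
    simp only [Matrix.add_mul, Matrix.mul_add, Matrix.mul_assoc,
      mul_nonsing_inv_cancel_left _ _ hS, nonsing_inv_mul _ hC, Matrix.mul_one]
  calc S⁻¹ * U * (C + V * S⁻¹ * U)⁻¹
      = (S + U * C⁻¹ * V)⁻¹ * ((S + U * C⁻¹ * V) * (S⁻¹ * U)) * (C + V * S⁻¹ * U)⁻¹ := by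
        rw [nonsing_inv_mul_cancel_left _ _ hSC]
    _ = (S + U * C⁻¹ * V)⁻¹ * U * C⁻¹ := by
        rw [key, ← Matrix.mul_assoc, ← Matrix.mul_assoc, mul_nonsing_inv_cancel_right _ _ hCS,
          Matrix.mul_assoc]

theorem mul_mul_nonsing_inv_mul_of_commute {S W : Matrix p p K} {n : Type*} (M : Matrix p n K)
    (hSW : Commute S W) (hS : IsUnit S.det) : S * (W * S⁻¹ * M) = W * M := by
  rw [← Matrix.mul_assoc, ← Matrix.mul_assoc, hSW.eq, Matrix.mul_assoc W S,
    mul_nonsing_inv _ hS, Matrix.mul_one]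

theorem srr_eq_mixed (S : Matrix p p K) (R : Matrix q p K) (C : Matrix q q K) (v : K)
    (hS : IsUnit S.det) (hC : IsUnit C.det)
    (hA : IsUnit (S + v • (Rᵀ * C⁻¹ * R)).det) (hB : IsUnit (C + v • (R * S⁻¹ * Rᵀ)).det)
    (b : p → K) (r : q → K) :
    b + v • ((S⁻¹ * Rᵀ * (C + v • (R * S⁻¹ * Rᵀ))⁻¹) *ᵥ (r - R *ᵥ b)) =
      (S + v • (Rᵀ * C⁻¹ * R))⁻¹ *ᵥ (S *ᵥ b + (v • (Rᵀ * C⁻¹)) *ᵥ r) := by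
  have hgain : S⁻¹ * Rᵀ * (C + v • (R * S⁻¹ * Rᵀ))⁻¹ = (S + v • (Rᵀ * C⁻¹ * R))⁻¹ * Rᵀ * C⁻¹ := by
    simpa only [Matrix.smul_mul, Matrix.mul_smul] using
      nonsing_inv_mul_mul_nonsing_inv_add S C Rᵀ (v • R) hS hC
        (by simpa only [Matrix.mul_smul] using hA) (by simpa only [Matrix.smul_mul] using hB)
  have hAS : (S + v • (Rᵀ * C⁻¹ * R))⁻¹ * S =
      1 - v • ((S + v • (Rᵀ * C⁻¹ * R))⁻¹ * Rᵀ * C⁻¹ * R) := by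
    rw [eq_sub_iff_add_eq, ← nonsing_inv_mul _ hA, Matrix.mul_add, Matrix.mul_smul]
    simp only [Matrix.mul_assoc]
  generalize (S + v • (Rᵀ * C⁻¹ * R))⁻¹ = A at hgain hAS ⊢
  rw [hgain, mulVec_add, mulVec_mulVec, hAS, mulVec_mulVec]
  simp only [sub_mulVec, one_mulVec, mulVec_sub, smul_mulVec, Matrix.mul_smul, ← mulVec_mulVec]
  module

theorem mixed_eq_affine_noise {N : Type*} [Fintype N] (X : Matrix N p K) (R : Matrix q p K)
    (C : Matrix q q K) (S W A : Matrix p p K) (v : K) (hS : S = Xᵀ * X)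
    (hA : A * (S + v • (Rᵀ * C⁻¹ * R)) = 1) (β : p → K) (u : N → K) (w : q → K) :
    A *ᵥ ((W * Xᵀ) *ᵥ (X *ᵥ β + u) + (v • (Rᵀ * C⁻¹)) *ᵥ (R *ᵥ β + w)) =
      β + (A * (W - 1) * S) *ᵥ β + ((A * W * Xᵀ) *ᵥ u + (v • (A * (Rᵀ * C⁻¹))) *ᵥ w) := by
  suffices h : A *ᵥ ((W * Xᵀ) *ᵥ (X *ᵥ β + u) + (v • (Rᵀ * C⁻¹)) *ᵥ (R *ᵥ β + w)) =
      (A * (S + v • (Rᵀ * C⁻¹ * R))) *ᵥ β + (A * (W - 1) * S) *ᵥ β +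
        ((A * W * Xᵀ) *ᵥ u + (v • (A * (Rᵀ * C⁻¹))) *ᵥ w) by
    rwa [hA, one_mulVec] at h
  subst hS
  simp only [mulVec_add, mulVec_mulVec, Matrix.mul_add, Matrix.mul_sub, Matrix.sub_mul,
    add_mulVec, sub_mulVec, Matrix.mul_smul, Matrix.smul_mul, Matrix.mul_one, Matrix.mul_assoc]
  abel

end LinearAlgebra

theorem stmt14_general {N p j : ℕ} {Ω : Type*} [MeasurableSpace Ω] (μ : Measure Ω) [IsProbabilityMeasure μ]
    (X : Matrix (Fin N) (Fin p) ℝ) (R : Matrix (Fin j) (Fin p) ℝ)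
    (Om : Matrix (Fin j) (Fin j) ℝ) (β : Fin p → ℝ) (σ v k : ℝ)
    (hOm : Om.PosDef)
    (ε : Ω → Fin N → ℝ) (e : Ω → Fin j → ℝ)
    (hεint : ∀ i, MemLp (fun ω => ε ω i) 2 μ) (heint : ∀ i, MemLp (fun ω => e ω i) 2 μ)
    (hεmean : vmean μ ε = 0) (hεcov : vcov μ ε = σ ^ 2 • (1 : Matrix (Fin N) (Fin N) ℝ))
    (hemean : vmean μ e = 0) (hecov : vcov μ e = σ ^ 2 • Om)
    (hindep : ProbabilityTheory.IndepFun ε e μ)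
    (S : Matrix (Fin p) (Fin p) ℝ) (hS : S = Xᵀ * X) (hSinv : IsUnit S.det)
    (hAinv : IsUnit (S + v • (Rᵀ * Om⁻¹ * R)).det)
    (hBinv : IsUnit (Om + v • (R * S⁻¹ * Rᵀ)).det)
    (y : Ω → Fin N → ℝ) (hy : ∀ ω, y ω = X.mulVec β + ε ω)
    (r : Ω → Fin j → ℝ) (hr : ∀ ω, r ω = R.mulVec β + e ω)
    (W : Matrix (Fin p) (Fin p) ℝ) (hW : W = (1 + k • S⁻¹)⁻¹)
    (βR : Ω → Fin p → ℝ) (hβR : ∀ ω, βR ω = (W * S⁻¹ * Xᵀ).mulVec (y ω))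
    (βSRR : Ω → Fin p → ℝ)
    (hSRR : ∀ ω, βSRR ω = βR ω +
      v • (S⁻¹ * Rᵀ * (Om + v • (R * S⁻¹ * Rᵀ))⁻¹).mulVec (r ω - R.mulVec (βR ω)))
    (A : Matrix (Fin p) (Fin p) ℝ) (hA : A = (S + v • (Rᵀ * Om⁻¹ * R))⁻¹) :
    vmean μ βSRR = β + (A * (W - 1) * S).mulVec β ∧
      vcov μ βSRR = σ ^ 2 • (A * (W * S * Wᵀ + v ^ 2 • (Rᵀ * Om⁻¹ * R)) * A) := by
  have hOminv : IsUnit Om.det := (isUnit_iff_isUnit_det Om).mp hOm.isUnit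
  have hOmT : Omᵀ = Om := hOm.isHermitian
  have hAT : Aᵀ = A := by
    simp only [hA, transpose_nonsing_inv, transpose_add, transpose_smul, transpose_mul,
      transpose_transpose, hOmT, hS, Matrix.mul_assoc]
  have hSW : S * (W * S⁻¹ * Xᵀ) = W * Xᵀ := mul_mul_nonsing_inv_mul_of_commute Xᵀ
    (hW ▸ commute_nonsing_inv_one_add_smul_nonsing_inv hSinv k) hSinv
  have hform : βSRR = fun ω => (β + (A * (W - 1) * S) *ᵥ β) +
      ((A * W * Xᵀ) *ᵥ ε ω + (v • (A * (Rᵀ * Om⁻¹))) *ᵥ e ω) := by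
    funext ω
    rw [hSRR, srr_eq_mixed S R Om v hSinv hOminv hAinv hBinv, ← hA, hβR, mulVec_mulVec, hSW,
      hy, hr]
    exact mixed_eq_affine_noise X R Om S W A v hS (hA ▸ nonsing_inv_mul _ hAinv) β (ε ω) (e ω)
  subst hform
  refine ⟨vmean_const_add_mulVec_add_mulVec _ _ _ (fun i => (hεint i).integrable one_le_two)
    (fun i => (heint i).integrable one_le_two) hεmean hemean, ?_⟩
  rw [vcov_const_add_mulVec_add_mulVec _ _ _ hεint heint hεmean hemean hindep, hεcov, hecov]
  simp only [transpose_mul, transpose_smul, transpose_transpose, hAT, transpose_nonsing_inv,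
    hOmT, Matrix.smul_mul, Matrix.mul_smul, Matrix.mul_one, Matrix.mul_add, Matrix.add_mul,
    smul_smul, Matrix.mul_assoc]
  rw [← Matrix.mul_assoc Xᵀ X, ← hS, nonsing_inv_mul_cancel_left _ _ hOminv]
  module

theorem stmt14 {N p j : ℕ} {Ω : Type*} [MeasurableSpace Ω] (μ : Measure Ω) [IsProbabilityMeasure μ]
    (X : Matrix (Fin N) (Fin p) ℝ) (R : Matrix (Fin j) (Fin p) ℝ)
    (Om : Matrix (Fin j) (Fin j) ℝ) (β : Fin p → ℝ) (σ v k : ℝ)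
    (hv : 0 < v) (hk : 0 < k) (hOm : Om.PosDef)
    (ε : Ω → Fin N → ℝ) (e : Ω → Fin j → ℝ)
    (hεint : ∀ i, MemLp (fun ω => ε ω i) 2 μ) (heint : ∀ i, MemLp (fun ω => e ω i) 2 μ)
    (hεmean : vmean μ ε = 0) (hεcov : vcov μ ε = σ ^ 2 • (1 : Matrix (Fin N) (Fin N) ℝ))
    (hemean : vmean μ e = 0) (hecov : vcov μ e = σ ^ 2 • Om)
    (hindep : ProbabilityTheory.IndepFun ε e μ)
    (S : Matrix (Fin p) (Fin p) ℝ) (hS : S = Xᵀ * X) (hSinv : IsUnit S.det)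
    (hWinv : IsUnit (1 + k • S⁻¹).det)
    (hAinv : IsUnit (S + v • (Rᵀ * Om⁻¹ * R)).det)
    (hBinv : IsUnit (Om + v • (R * S⁻¹ * Rᵀ)).det)
    (y : Ω → Fin N → ℝ) (hy : ∀ ω, y ω = X.mulVec β + ε ω)
    (r : Ω → Fin j → ℝ) (hr : ∀ ω, r ω = R.mulVec β + e ω)
    (W : Matrix (Fin p) (Fin p) ℝ) (hW : W = (1 + k • S⁻¹)⁻¹)
    (βR : Ω → Fin p → ℝ) (hβR : ∀ ω, βR ω = (W * S⁻¹ * Xᵀ).mulVec (y ω))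
    (βSRR : Ω → Fin p → ℝ)
    (hSRR : ∀ ω, βSRR ω = βR ω +
      v • (S⁻¹ * Rᵀ * (Om + v • (R * S⁻¹ * Rᵀ))⁻¹).mulVec (r ω - R.mulVec (βR ω)))
    (A : Matrix (Fin p) (Fin p) ℝ) (hA : A = (S + v • (Rᵀ * Om⁻¹ * R))⁻¹) :
    vmean μ βSRR = β + (A * (W - 1) * S).mulVec β ∧
      vcov μ βSRR = σ ^ 2 • (A * (W * S * Wᵀ + v ^ 2 • (Rᵀ * Om⁻¹ * R)) * A) :=
  stmt14_general μ X R Om β σ v k hOm ε e hεint heint hεmean hεcov hemean hecov hindep S hS hSinv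
    hAinv hBinv y hy r hr W hW βR hβR βSRR hSRR A hA
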